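/- arXiv:2605.26022 — 2 statements merged into one kernel-verified Lean document; each statement's English description precedes it below -/
import Mathlib

section
/- Let X be a normed space, G : X → ℝ ∪ {+∞} convex and proper, and H : X → ℝ Lipschitz continuous and convex. Then the infimal convolution G □ H is lower semicontinuous. -/
/-! For every inner point `w`, the Lipschitz bound `H (x - w) ≤ H (z - w) + L ‖x - z‖` survives
taking the infimum over `w`, so `(G □ H) x - L ‖x - z‖ ≤ (G □ H) z`; a function satisfying such a
one-sided Lipschitz bound is lower semicontinuous. -/

open scoped NNReal

/-- Convexity for extended-real-valued functions. -/
def ERealConvexOn {X : Type*} [AddCommGroup X] [Module ℝ X] (F : X → EReal) : Prop :=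
  ∀ x y : X, ∀ a b : ℝ, 0 ≤ a → 0 ≤ b → a + b = 1 →
    F (a • x + b • y) ≤ (a : EReal) * F x + (b : EReal) * F y

open scoped Topology

noncomputable def infConv {X : Type*} [Sub X] (G : X → EReal) (H : X → ℝ) (x : X) : EReal :=
  ⨅ y : X, G y + ((H (x - y) : ℝ) : EReal)

theorem infConv_sub_mul_dist_le {X : Type*} [SeminormedAddCommGroup X] (G : X → EReal)
    {H : X → ℝ} {L : ℝ≥0} (hH : LipschitzWith L H) (x z : X) :
    infConv G H x - ((L * dist x z : ℝ) : EReal) ≤ infConv G H z := by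
  refine le_iInf fun w => EReal.sub_le_of_le_add ?_
  have hHw : H (x - w) ≤ H (z - w) + L * dist x z := by
    simpa only [dist_sub_right] using hH.le_add_mul (x - w) (z - w)
  calc infConv G H x ≤ G w + ((H (x - w) : ℝ) : EReal) := iInf_le _ w
    _ ≤ G w + ((H (z - w) + L * dist x z : ℝ) : EReal) := by gcongr
    _ = G w + ((H (z - w) : ℝ) : EReal) + ((L * dist x z : ℝ) : EReal) := by
      rw [EReal.coe_add, add_assoc]

theorem lowerSemicontinuous_of_sub_mul_dist_le {X : Type*} [PseudoMetricSpace X] {F : X → EReal}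
    (L : ℝ) (hF : ∀ x z, F x - ((L * dist x z : ℝ) : EReal) ≤ F z) : LowerSemicontinuous F := by
  intro x y hy
  obtain ⟨s, hys, hsx⟩ := EReal.exists_between_coe_real hy
  obtain ⟨r, hyr, hrs⟩ := EReal.exists_between_coe_real hys
  have hclose : ∀ᶠ z in 𝓝 x, L * dist x z < s - r := by
    have hcont : Continuous fun z => L * dist x z := by fun_prop
    refine hcont.continuousAt.eventually_lt continuousAt_const ?_
    simpa using EReal.coe_lt_coe_iff.1 hrs
  filter_upwards [hclose] with z hz
  calc y < r := hyr
    _ ≤ ((s - L * dist x z : ℝ) : EReal) := by exact_mod_cast (by linarith : r ≤ s - L * dist x z)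
    _ = (s : EReal) - ((L * dist x z : ℝ) : EReal) := EReal.coe_sub _ _
    _ ≤ F x - ((L * dist x z : ℝ) : EReal) := EReal.sub_le_sub hsx.le le_rfl
    _ ≤ F z := hF x z

theorem lowerSemicontinuous_infConv {X : Type*} [SeminormedAddCommGroup X] (G : X → EReal)
    {H : X → ℝ} {L : ℝ≥0} (hH : LipschitzWith L H) : LowerSemicontinuous (infConv G H) :=
  lowerSemicontinuous_of_sub_mul_dist_le L (infConv_sub_mul_dist_le G hH)

theorem stmt1_general {X : Type*} [NormedAddCommGroup X]
    (G : X → EReal) (H : X → ℝ) (L : ℝ≥0)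
    (hHlip : LipschitzWith L H) :
    LowerSemicontinuous (fun x => ⨅ y : X, G y + ((H (x - y) : ℝ) : EReal)) :=
  lowerSemicontinuous_infConv G hHlip

/-- If `G` is convex and proper and `H` is real-valued, convex, and Lipschitz,
then the infimal convolution `G □ H` is lower semicontinuous. -/
theorem stmt1 {X : Type*} [NormedAddCommGroup X] [NormedSpace ℝ X]
    (G : X → EReal) (H : X → ℝ) (L : ℝ≥0)
    (hGc : ERealConvexOn G) (hGbot : ∀ x, G x ≠ ⊥) (hGprop : ∃ x, G x ≠ ⊤)
    (hHc : ConvexOn ℝ Set.univ H) (hHlip : LipschitzWith L H) :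
    LowerSemicontinuous (fun x => ⨅ y : X, G y + ((H (x - y) : ℝ) : EReal)) :=
  stmt1_general G H L hHlip
end

section
/- Let G and H be seminorms on a normed space X. Then the function F(x) := sqrt( inf_{x̃ ∈ X} ( G(x̃)² + H(x − x̃)² ) ) is a seminorm on X, i.e., it is nonnegative, positively homogeneous (F(λx) = |λ| F(x)), and satisfies the triangle inequality F(x + z) ≤ F(x) + F(z). -/
open Real

private lemma sqrt_minkowski {a b c d : ℝ} (ha : 0 ≤ a) (hb : 0 ≤ b) (hc : 0 ≤ c) (hd : 0 ≤ d) :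
    Real.sqrt ((a + c)^2 + (b + d)^2) ≤ Real.sqrt (a^2 + b^2) + Real.sqrt (c^2 + d^2) := by
  have h1 : Real.sqrt (a^2+b^2) ^ 2 = a^2 + b^2 := Real.sq_sqrt (by positivity)
  have h2 : Real.sqrt (c^2+d^2) ^ 2 = c^2 + d^2 := Real.sq_sqrt (by positivity)
  have hs1 := Real.sqrt_nonneg (a^2+b^2)
  have hs2 := Real.sqrt_nonneg (c^2+d^2)
  have key : (a+c)^2 + (b+d)^2 ≤ (Real.sqrt (a^2+b^2) + Real.sqrt (c^2+d^2))^2 := by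
    have hcs : a*c + b*d ≤ Real.sqrt (a^2+b^2) * Real.sqrt (c^2+d^2) := by
      nlinarith [sq_nonneg (a*d - b*c), mul_nonneg hs1 hs2, mul_nonneg ha hc, mul_nonneg hb hd]
    nlinarith
  calc Real.sqrt ((a+c)^2 + (b+d)^2) ≤ Real.sqrt ((Real.sqrt (a^2+b^2) + Real.sqrt (c^2+d^2))^2) :=
        Real.sqrt_le_sqrt key
    _ = _ := Real.sqrt_sq (by positivity)

private lemma sqrt_mono2 {a b c d : ℝ} (ha : 0 ≤ a) (hb : 0 ≤ b) (hac : a ≤ c) (hbd : b ≤ d) :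
    Real.sqrt (a^2 + b^2) ≤ Real.sqrt (c^2 + d^2) := by
  apply Real.sqrt_le_sqrt
  have : a^2 ≤ c^2 := by nlinarith
  have : b^2 ≤ d^2 := by nlinarith
  linarith

/-- The square-root of the infimal convolution of the squares of two seminorms
is a seminorm: nonnegative, absolutely homogeneous, and subadditive. -/
theorem stmt6 {X : Type*} [NormedAddCommGroup X] [NormedSpace ℝ X]
    (G H : Seminorm ℝ X)
    (F : X → ℝ) (hF : F = fun x => Real.sqrt (⨅ y : X, (G y)^2 + (H (x - y))^2)) :
    (∀ x : X, 0 ≤ F x) ∧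
    (∀ (l : ℝ) (x : X), F (l • x) = |l| * F x) ∧
    (∀ x z : X, F (x + z) ≤ F x + F z) := by
  have hbdd : ∀ x : X, BddBelow (Set.range fun y : X => (G y)^2 + (H (x - y))^2) := by
    intro x
    refine ⟨0, ?_⟩
    rintro _ ⟨y, rfl⟩
    positivity
  -- F x = ⨅ y, sqrt (G y ^2 + H(x-y)^2)
  have hFs : ∀ x : X, F x = ⨅ y : X, Real.sqrt ((G y)^2 + (H (x - y))^2) := by
    intro x
    rw [hF]
    exact Monotone.map_ciInf_of_continuousAt
      (Real.continuous_sqrt.continuousAt) (fun _ _ h => Real.sqrt_le_sqrt h) (hbdd x)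
  have hbdds : ∀ x : X, BddBelow (Set.range fun y : X => Real.sqrt ((G y)^2 + (H (x - y))^2)) := by
    intro x
    refine ⟨0, ?_⟩
    rintro _ ⟨y, rfl⟩
    positivity
  refine ⟨?_, ?_, ?_⟩
  · intro x
    rw [hF]
    exact Real.sqrt_nonneg _
  · intro l x
    rcases eq_or_ne l 0 with rfl | hl
    · simp only [zero_smul, abs_zero, zero_mul]
      rw [hFs]
      refine le_antisymm ?_ (le_ciInf fun y => Real.sqrt_nonneg _)
      refine ciInf_le_of_le (hbdds 0) 0 ?_
      simp
    · rw [hFs, hFs, Real.mul_iInf_of_nonneg (abs_nonneg l)]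
      have key : ∀ y : X, |l| * Real.sqrt ((G y)^2 + (H (x - y))^2)
          = Real.sqrt ((G (l • y))^2 + (H (l • x - l • y))^2) := by
        intro y
        rw [← smul_sub, map_smul_eq_mul, map_smul_eq_mul, Real.norm_eq_abs, mul_pow, mul_pow,
          ← mul_add, Real.sqrt_mul (by positivity), Real.sqrt_sq (abs_nonneg l)]
      simp_rw [key]
      refine le_antisymm (le_ciInf fun y => ?_) (le_ciInf fun y => ?_)
      · refine ciInf_le_of_le ?_ (l • y) le_rfl
        refine ⟨0, ?_⟩; rintro _ ⟨y, rfl⟩; positivity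
      · refine ciInf_le_of_le ?_ (l⁻¹ • y) ?_
        · refine ⟨0, ?_⟩; rintro _ ⟨y, rfl⟩; positivity
        · rw [smul_inv_smul₀ hl]
  · intro x z
    rw [hFs, hFs, hFs]
    refine le_ciInf_add_ciInf fun y1 y2 => ?_
    refine ciInf_le_of_le (hbdds _) (y1 + y2) ?_
    have h1 : (x + z) - (y1 + y2) = (x - y1) + (z - y2) := by abel
    calc Real.sqrt ((G (y1 + y2))^2 + (H ((x + z) - (y1 + y2)))^2)
        ≤ Real.sqrt ((G y1 + G y2)^2 + (H (x - y1) + H (z - y2))^2) := by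
          apply sqrt_mono2 (apply_nonneg _ _) (apply_nonneg _ _) (map_add_le_add G _ _)
          rw [h1]; exact map_add_le_add H _ _
      _ ≤ _ := sqrt_minkowski (apply_nonneg _ _) (apply_nonneg _ _)
            (apply_nonneg _ _) (apply_nonneg _ _)
end
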